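/- arXiv:1309.4062 — 2 statements merged into one kernel-verified Lean document; each statement's English description precedes it below -/
import Mathlib

section
/- Let M be a positive integer and let a, C, c > 0 and, for each j ∈ {1,…,M}, λ_j > 0, b_j > 0 and q_j ∈ (0,1] be real numbers. Define D : [0,1]^M → ℝ by D(p) = C · (Σ_{j=1}^M λ_j q_j min{a p_j, b_j}) / (1 + c Σ_{j=1}^M λ_j q_j p_j). Then D attains its maximum over [0,1]^M at the point p* given by p*_j = min{1, b_j / a} for every j. -/
/-!
Clipping a hopping profile `p ∈ [0,1]^M` to `p ⊓ p*` keeps every term `min (a p_j) b_j`, since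
`a p*_j = min a b_j` and `a p_j ≤ a`, while it can only shrink the interference sum in the
denominator. On the box `[0, p*]` the numerator is linear, `a · Σ w_j p_j`, so the objective is
`C a s / (1 + c s)` in the load `s = Σ w_j p_j`, which increases with `s`; hence `p*` wins.
-/

open Finset

variable {ι : Type*}

theorem mul_div_one_add_mul_le {k c x y : ℝ} (hk : 0 ≤ k) (hc : 0 ≤ c) (hx : 0 ≤ x)
    (hxy : x ≤ y) : k * x / (1 + c * x) ≤ k * y / (1 + c * y) := by
  rw [div_le_div_iff₀ (by positivity) (by nlinarith)]
  nlinarith [mul_nonneg hk (sub_nonneg.2 hxy)]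

noncomputable def optimalProb (a : ℝ) (b : ι → ℝ) (j : ι) : ℝ :=
  min 1 (b j / a)

section

variable {a C c : ℝ} {b : ι → ℝ}

theorem optimalProb_mem_Icc (ha : 0 < a) (hb : 0 ≤ b) (j : ι) :
    optimalProb a b j ∈ Set.Icc (0 : ℝ) 1 :=
  ⟨le_min zero_le_one (div_nonneg (hb j) ha.le), min_le_left _ _⟩

theorem mul_optimalProb (ha : 0 < a) (j : ι) : a * optimalProb a b j = min a (b j) := by
  rw [optimalProb, mul_min_of_nonneg _ _ ha.le, mul_one, mul_div_cancel₀ _ ha.ne']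

theorem min_mul_eq_of_le_optimalProb (ha : 0 < a) {x : ι → ℝ} (hx : x ≤ optimalProb a b)
    (j : ι) : min (a * x j) (b j) = a * x j := by
  refine min_eq_left ?_
  calc a * x j ≤ a * optimalProb a b j := mul_le_mul_of_nonneg_left (hx j) ha.le
    _ ≤ b j := by rw [mul_optimalProb ha]; exact min_le_right _ _

theorem min_mul_inf_optimalProb (ha : 0 < a) {p : ι → ℝ} (hp : p ≤ 1) (j : ι) :
    min (a * (p ⊓ optimalProb a b) j) (b j) = min (a * p j) (b j) := by
  have hap : a * p j ≤ a := mul_le_of_le_one_right ha.le (hp j)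
  rw [Pi.inf_apply, mul_min_of_nonneg _ _ ha.le, mul_optimalProb ha, min_assoc,
    min_eq_left (min_le_right a (b j)), ← min_assoc, min_eq_left hap]

variable [Fintype ι] {w : ι → ℝ}

/-- The objective `D` of the statement, with the weights `w_j = λ_j q_j`. -/
noncomputable def rateDensity (a C c : ℝ) (w b p : ι → ℝ) : ℝ :=
  C * (∑ j, w j * min (a * p j) (b j)) / (1 + c * ∑ j, w j * p j)

theorem rateDensity_le_inf_optimalProb (ha : 0 < a) (hC : 0 ≤ C) (hc : 0 ≤ c) (hw : 0 ≤ w)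
    (hb : 0 ≤ b) {p : ι → ℝ} (hp₀ : 0 ≤ p) (hp₁ : p ≤ 1) :
    rateDensity a C c w b p ≤ rateDensity a C c w b (p ⊓ optimalProb a b) := by
  have hclip₀ : 0 ≤ p ⊓ optimalProb a b := le_inf hp₀ fun j => (optimalProb_mem_Icc ha hb j).1
  have hload : ∑ j, w j * (p ⊓ optimalProb a b) j ≤ ∑ j, w j * p j :=
    sum_le_sum fun j _ => mul_le_mul_of_nonneg_left (inf_le_left : _ ⊓ _ ≤ _) (hw j)
  have hload₀ : 0 ≤ ∑ j, w j * (p ⊓ optimalProb a b) j :=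
    sum_nonneg fun j _ => mul_nonneg (hw j) (hclip₀ j)
  unfold rateDensity
  simp only [min_mul_inf_optimalProb ha hp₁]
  refine div_le_div_of_nonneg_left ?_ (by nlinarith) (by nlinarith)
  exact mul_nonneg hC (sum_nonneg fun j _ => mul_nonneg (hw j) (le_min
    (mul_nonneg ha.le (hp₀ j)) (hb j)))

theorem rateDensity_le_of_le_optimalProb (ha : 0 < a) (hC : 0 ≤ C) (hc : 0 ≤ c)
    (hw : 0 ≤ w) {x : ι → ℝ} (hx₀ : 0 ≤ x) (hx : x ≤ optimalProb a b) :
    rateDensity a C c w b x ≤ rateDensity a C c w b (optimalProb a b) := by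
  have hlinear : ∀ y ≤ optimalProb a b,
      rateDensity a C c w b y = C * a * (∑ j, w j * y j) / (1 + c * ∑ j, w j * y j) := by
    intro y hy
    simp only [rateDensity, min_mul_eq_of_le_optimalProb ha hy, mul_sum, mul_assoc, mul_left_comm]
  rw [hlinear x hx, hlinear _ le_rfl]
  exact mul_div_one_add_mul_le (mul_nonneg hC ha.le) hc
    (sum_nonneg fun j _ => mul_nonneg (hw j) (hx₀ j))
    (sum_le_sum fun j _ => mul_le_mul_of_nonneg_left (hx j) (hw j))

theorem rateDensity_le_optimalProb (ha : 0 < a) (hC : 0 ≤ C) (hc : 0 ≤ c) (hw : 0 ≤ w)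
    (hb : 0 ≤ b) {p : ι → ℝ} (hp₀ : 0 ≤ p) (hp₁ : p ≤ 1) :
    rateDensity a C c w b p ≤ rateDensity a C c w b (optimalProb a b) :=
  (rateDensity_le_inf_optimalProb ha hC hc hw hb hp₀ hp₁).trans <|
    rateDensity_le_of_le_optimalProb ha hC hc hw
      (le_inf hp₀ fun j => (optimalProb_mem_Icc ha hb j).1) inf_le_right

end

theorem stmt_11_general (M : ℕ) (a C c : ℝ) (ha : 0 < a) (hC : 0 < C) (hc : 0 < c)
    (lam b q : Fin M → ℝ) (hlam : ∀ j, 0 < lam j) (hb : ∀ j, 0 < b j)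
    (hq : ∀ j, q j ∈ Set.Ioc (0 : ℝ) 1)
    (D : (Fin M → ℝ) → ℝ)
    (hD : ∀ p, D p = C * (∑ j, lam j * q j * min (a * p j) (b j))
        / (1 + c * ∑ j, lam j * q j * p j)) :
    (∀ j, min 1 (b j / a) ∈ Set.Icc (0 : ℝ) 1) ∧
    ∀ p : Fin M → ℝ, (∀ j, p j ∈ Set.Icc (0 : ℝ) 1) →
      D p ≤ D (fun j => min 1 (b j / a)) := by
  have hb₀ : 0 ≤ b := fun j => (hb j).le
  have hw : 0 ≤ lam * q := fun j => mul_nonneg (hlam j).le (hq j).1.le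
  have hD' : D = rateDensity a C c (lam * q) b := funext hD
  refine ⟨optimalProb_mem_Icc ha hb₀, fun p hp => ?_⟩
  rw [hD']
  exact rateDensity_le_optimalProb ha hC.le hc.le hw hb₀ (fun j => (hp j).1) fun j => (hp j).2

/-- Proposition 5: the rate-density lower bound of the dedicated network is maximized
over the hopping-probability cube `[0,1]^M` at `p*_j = min {1, b_j / a}`. -/
theorem stmt_11 (M : ℕ) (hM : 0 < M) (a C c : ℝ) (ha : 0 < a) (hC : 0 < C) (hc : 0 < c)
    (lam b q : Fin M → ℝ) (hlam : ∀ j, 0 < lam j) (hb : ∀ j, 0 < b j)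
    (hq : ∀ j, q j ∈ Set.Ioc (0 : ℝ) 1)
    (D : (Fin M → ℝ) → ℝ)
    (hD : ∀ p, D p = C * (∑ j, lam j * q j * min (a * p j) (b j))
        / (1 + c * ∑ j, lam j * q j * p j)) :
    (∀ j, min 1 (b j / a) ∈ Set.Icc (0 : ℝ) 1) ∧
    ∀ p : Fin M → ℝ, (∀ j, p j ∈ Set.Icc (0 : ℝ) 1) →
      D p ≤ D (fun j => min 1 (b j / a)) :=
  stmt_11_general M a C c ha hC hc lam b q hlam hb hq D hD
end

section
/- Let M be a positive integer, let T ∈ ℝ and A > 0 be real numbers, let b_j > 0 and λ_j > 0 for j = 1,…,M, let b_C > 0, λ_U > 0 and w ≥ 1 be real numbers, and let x ∈ [0,1]^M. Define d : ∏_{j=1}^M [x_j, 1] → ℝ by d(p) = T + A · (Σ_{j=1}^M b_j λ_j (1 − p_j) + w b_C λ_U) / (b_C λ_U + Σ_{j=1}^M b_j λ_j (1 − p_j)). Then d attains its maximum over ∏_{j=1}^M [x_j, 1] at p = (1, …, 1). -/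
open Finset

/-! The rate density depends on `p` only through the load `S p = ∑ j, b j * lam j * (1 - p j) ≥ 0`,
via `s ↦ (s + w c) / (c + s)` with `c = bC * lamU`. For `w ≥ 1` this map is antitone on `[0, ∞)`,
and `S` vanishes at the all-ones vector. -/

theorem antitoneOn_add_mul_div_add {c w : ℝ} (hc : 0 < c) (hw : 1 ≤ w) :
    AntitoneOn (fun s : ℝ => (s + w * c) / (c + s)) (Set.Ici 0) := by
  intro s hs t _ hst
  rw [Set.mem_Ici] at hs
  dsimp only
  -- cross-multiplied, the difference of the two sides is `(w - 1) c (t - s)`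
  rw [div_le_div_iff₀ (by linarith) (by linarith)]
  nlinarith [mul_nonneg (mul_nonneg (sub_nonneg.2 hw) hc.le) (sub_nonneg.2 hst)]

theorem stmt_19_general (M : ℕ) (T A : ℝ) (hA : 0 < A)
    (b lam : Fin M → ℝ) (hb : ∀ j, 0 < b j) (hlam : ∀ j, 0 < lam j)
    (bC lamU w : ℝ) (hbC : 0 < bC) (hlamU : 0 < lamU) (hw : 1 ≤ w)
    (x : Fin M → ℝ)
    (d : (Fin M → ℝ) → ℝ)
    (hd : ∀ p, d p = T + A * ((∑ j, b j * lam j * (1 - p j)) + w * bC * lamU)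
        / (bC * lamU + ∑ j, b j * lam j * (1 - p j))) :
    ∀ p : Fin M → ℝ, (∀ j, p j ∈ Set.Icc (x j) 1) → d p ≤ d (fun _ => 1) := by
  intro p hp
  have hS : 0 ≤ ∑ j, b j * lam j * (1 - p j) :=
    sum_nonneg fun j _ => mul_nonneg (mul_pos (hb j) (hlam j)).le (sub_nonneg.2 (hp j).2)
  have key := antitoneOn_add_mul_div_add (mul_pos hbC hlamU) hw Set.self_mem_Ici hS hS
  rw [hd, hd]
  simp only [sub_self, mul_zero, sum_const_zero, mul_assoc w, mul_div_assoc] at key ⊢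
  gcongr

/-- Proposition 8: in the fully loaded shared network, after the change of variables
`x_j = p_{t_j} p_{f_j}`, the rate density is maximized over
`∏_j [x_j, 1]` at the all-ones time-hopping vector. -/
theorem stmt_19 (M : ℕ) (hM : 0 < M) (T A : ℝ) (hA : 0 < A)
    (b lam : Fin M → ℝ) (hb : ∀ j, 0 < b j) (hlam : ∀ j, 0 < lam j)
    (bC lamU w : ℝ) (hbC : 0 < bC) (hlamU : 0 < lamU) (hw : 1 ≤ w)
    (x : Fin M → ℝ) (hx : ∀ j, x j ∈ Set.Icc (0 : ℝ) 1)
    (d : (Fin M → ℝ) → ℝ)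
    (hd : ∀ p, d p = T + A * ((∑ j, b j * lam j * (1 - p j)) + w * bC * lamU)
        / (bC * lamU + ∑ j, b j * lam j * (1 - p j))) :
    ∀ p : Fin M → ℝ, (∀ j, p j ∈ Set.Icc (x j) 1) → d p ≤ d (fun _ => 1) :=
  stmt_19_general M T A hA b lam hb hlam bC lamU w hbC hlamU hw x d hd
end
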